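/- For positive integers i, a, b, c (with convergence, e.g. all ≥ 2), the three 'cut-point' sums recombine: ζ_{sl(4)}(a,b,0,c,0,i) + ζ_{sl(4)}(i,0,b,a,0,c) + ζ_{sl(4)}(0,0,a,b,i,c) = ζ(i)·ζ_{sl(3)}(a,b,c) − ζ_{sl(3)}(a+i,b,c) − ζ_{sl(3)}(a,b,c+i). -/

import Mathlib

/-!
Expanding `ζ(i) ζ_{sl(3)}(a, b, c)` as one absolutely convergent sum over `(v, n₁, n₂)` and
splitting it according to where `v` falls relative to the cut points `n₁` and `n₁ + n₂`, each
of the five regions is, after a change of variables, one of the five sums in the identity.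
-/

noncomputable def wittenSl4 (a b c d e f : ℕ) : ℝ :=
  ∑' (n₁ : ℕ) (n₂ : ℕ) (n₃ : ℕ),
    1 / ((n₁ + 1 : ℝ) ^ a * (n₂ + 1 : ℝ) ^ b * (n₃ + 1 : ℝ) ^ c *
      (n₁ + n₂ + 2 : ℝ) ^ d * (n₂ + n₃ + 2 : ℝ) ^ e * (n₁ + n₂ + n₃ + 3 : ℝ) ^ f)

noncomputable def wittenSl3 (a b c : ℕ) : ℝ :=
  ∑' (m : ℕ) (n : ℕ), 1 / ((m + 1 : ℝ) ^ a * (n + 1 : ℝ) ^ b * (m + n + 2 : ℝ) ^ c)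

noncomputable def rzeta (s : ℕ) : ℝ := ∑' (n : ℕ), 1 / ((n + 1 : ℝ) ^ s)

open Function

noncomputable def zetaTerm (s n : ℕ) : ℝ := 1 / ((n + 1 : ℝ) ^ s)

noncomputable def sl3Term (a b c : ℕ) (p : ℕ × ℕ) : ℝ :=
  1 / ((p.1 + 1 : ℝ) ^ a * (p.2 + 1 : ℝ) ^ b * (p.1 + p.2 + 2 : ℝ) ^ c)

noncomputable def sl4Term (a b c d e f : ℕ) (p : ℕ × ℕ × ℕ) : ℝ :=
  1 / ((p.1 + 1 : ℝ) ^ a * (p.2.1 + 1 : ℝ) ^ b * (p.2.2 + 1 : ℝ) ^ c *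
    (p.1 + p.2.1 + 2 : ℝ) ^ d * (p.2.1 + p.2.2 + 2 : ℝ) ^ e * (p.1 + p.2.1 + p.2.2 + 3 : ℝ) ^ f)

theorem HasSum.sumElim {α β : Type*} {f : α → ℝ} {g : β → ℝ} {s : ℝ}
    (h : HasSum (Sum.elim f g) s) : HasSum f (∑' x, f x) ∧ HasSum g (s - ∑' x, f x) := by
  have hf : Summable f := h.summable.comp_injective Sum.inl_injective
  have hg : Summable g := h.summable.comp_injective Sum.inr_injective
  have hfg : HasSum (Sum.elim f g) (∑' x, f x + ∑' y, g y) := HasSum.sum hf.hasSum hg.hasSum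
  rw [← hfg.unique h, add_sub_cancel_left]
  exact ⟨hf.hasSum, hg.hasSum⟩

theorem Summable.tsum_prod_prod {α β γ : Type*} {f : α × β × γ → ℝ} (h : Summable f) :
    ∑' p, f p = ∑' (x) (y) (z), f (x, y, z) := by
  rw [h.tsum_prod]
  exact tsum_congr fun x ↦ (h.prod_factor x).tsum_prod

theorem wittenSl4_eq_of_hasSum {a b c d e f : ℕ} {s : ℝ}
    (h : HasSum (sl4Term a b c d e f) s) : wittenSl4 a b c d e f = s :=
  h.summable.tsum_prod_prod.symm.trans h.tsum_eq

theorem wittenSl3_eq_of_hasSum {a b c : ℕ} {s : ℝ} (h : HasSum (sl3Term a b c) s) :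
    wittenSl3 a b c = s :=
  h.summable.tsum_prod.symm.trans h.tsum_eq

theorem zetaTerm_nonneg (s n : ℕ) : 0 ≤ zetaTerm s n := by
  unfold zetaTerm; positivity

theorem sl3Term_nonneg (a b c : ℕ) (p : ℕ × ℕ) : 0 ≤ sl3Term a b c p := by
  unfold sl3Term; positivity

theorem summable_zetaTerm {s : ℕ} (hs : 2 ≤ s) : Summable (zetaTerm s) := by
  have := (summable_nat_add_iff 1).mpr (Real.summable_one_div_nat_pow.mpr (by omega : 1 < s))
  simp only [Nat.cast_add, Nat.cast_one] at this
  exact this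

theorem sl3Term_le_zetaTerm_mul (a b c : ℕ) (p : ℕ × ℕ) :
    sl3Term a b c p ≤ zetaTerm a p.1 * zetaTerm b p.2 := by
  rw [sl3Term, zetaTerm, zetaTerm, div_mul_div_comm, one_mul]
  apply one_div_le_one_div_of_le (by positivity)
  refine le_mul_of_one_le_right (by positivity) (one_le_pow₀ ?_)
  linarith [(p.1.cast_nonneg : (0 : ℝ) ≤ p.1), (p.2.cast_nonneg : (0 : ℝ) ≤ p.2)]

theorem summable_sl3Term {a b : ℕ} (ha : 2 ≤ a) (hb : 2 ≤ b) (c : ℕ) :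
    Summable (sl3Term a b c) :=
  Summable.of_nonneg_of_le (sl3Term_nonneg a b c) (sl3Term_le_zetaTerm_mul a b c)
    ((summable_zetaTerm ha).mul_of_nonneg (summable_zetaTerm hb) (zetaTerm_nonneg a)
      (zetaTerm_nonneg b))

theorem hasSum_zetaTerm_mul_sl3Term {i a b : ℕ} (hi : 2 ≤ i) (ha : 2 ≤ a) (hb : 2 ≤ b) (c : ℕ) :
    HasSum (fun p : ℕ × ℕ × ℕ ↦ zetaTerm i p.1 * sl3Term a b c p.2)
      (rzeta i * wittenSl3 a b c) := by
  have hz := summable_zetaTerm hi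
  have hw := summable_sl3Term ha hb c
  rw [wittenSl3_eq_of_hasSum hw.hasSum]
  exact hz.hasSum.mul hw.hasSum
    (hz.mul_of_nonneg hw (zetaTerm_nonneg i) (sl3Term_nonneg a b c))

/-- Indices are shifted to start at `0`, so the five regions of `(v, m, n)` are `v < m`, `v = m`,
`m < v ≤ m + n`, `v = m + n + 1` and `m + n + 1 < v`. -/
def cutPoint : (ℕ × ℕ × ℕ) ⊕ (ℕ × ℕ) ⊕ (ℕ × ℕ × ℕ) ⊕ (ℕ × ℕ) ⊕ (ℕ × ℕ × ℕ) → ℕ × ℕ × ℕ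
  | .inl (x, y, z) => (x, x + y + 1, z)
  | .inr (.inl (x, y)) => (x, x, y)
  | .inr (.inr (.inl (x, y, z))) => (z + y + 1, z, x + y + 1)
  | .inr (.inr (.inr (.inl (x, y)))) => (x + y + 1, x, y)
  | .inr (.inr (.inr (.inr (x, y, z)))) => (x + y + z + 2, x, y)

theorem cutPoint_injective : Injective cutPoint := by
  rintro (⟨x, y, z⟩ | ⟨x, y⟩ | ⟨x, y, z⟩ | ⟨x, y⟩ | ⟨x, y, z⟩)
    (⟨x', y', z'⟩ | ⟨x', y'⟩ | ⟨x', y', z'⟩ | ⟨x', y'⟩ | ⟨x', y', z'⟩) h <;>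
  simp only [cutPoint, Prod.mk.injEq, Sum.inl.injEq, Sum.inr.injEq, reduceCtorEq] at h ⊢ <;>
  omega

theorem cutPoint_surjective : Surjective cutPoint := by
  rintro ⟨v, m, n⟩
  rcases lt_trichotomy v m with hvm | rfl | hmv
  · exact ⟨.inl (v, m - v - 1, n), by simp only [cutPoint]; congr; omega⟩
  · exact ⟨.inr (.inl (v, n)), rfl⟩
  rcases lt_trichotomy v (m + n + 1) with hv | rfl | hv
  · exact ⟨.inr (.inr (.inl (m + n - v, v - m - 1, m))), by
      simp only [cutPoint, Prod.mk.injEq, true_and]; omega⟩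
  · exact ⟨.inr (.inr (.inr (.inl (m, n)))), rfl⟩
  · exact ⟨.inr (.inr (.inr (.inr (m, n, v - m - n - 2)))), by simp only [cutPoint]; congr; omega⟩

theorem zetaTerm_mul_sl3Term_comp_cutPoint (i a b c : ℕ) :
    (fun p : ℕ × ℕ × ℕ ↦ zetaTerm i p.1 * sl3Term a b c p.2) ∘ cutPoint =
      Sum.elim (sl4Term i 0 b a 0 c) (Sum.elim (sl3Term (a + i) b c)
        (Sum.elim (sl4Term 0 0 a b i c) (Sum.elim (sl3Term a b (c + i)) (sl4Term a b 0 c 0 i)))) := by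
  funext s
  rcases s with ⟨x, y, z⟩ | ⟨x, y⟩ | ⟨x, y, z⟩ | ⟨x, y⟩ | ⟨x, y, z⟩ <;>
  simp only [comp_apply, cutPoint, zetaTerm, sl3Term, sl4Term, Sum.elim_inl, Sum.elim_inr,
    div_mul_div_comm, one_mul] <;>
  congr 1 <;> push_cast <;> ring

theorem cut_point_recombination_general (i a b c : ℕ)
    (hi : 2 ≤ i) (ha : 2 ≤ a) (hb : 2 ≤ b) :
    wittenSl4 a b 0 c 0 i + wittenSl4 i 0 b a 0 c + wittenSl4 0 0 a b i c =
      rzeta i * wittenSl3 a b c - wittenSl3 (a + i) b c - wittenSl3 a b (c + i) := by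
  have hcut : HasSum ((fun p : ℕ × ℕ × ℕ ↦ zetaTerm i p.1 * sl3Term a b c p.2) ∘ cutPoint)
      (rzeta i * wittenSl3 a b c) :=
    (Equiv.ofBijective cutPoint ⟨cutPoint_injective, cutPoint_surjective⟩).hasSum_iff.mpr
      (hasSum_zetaTerm_mul_sl3Term hi ha hb c)
  rw [zetaTerm_mul_sl3Term_comp_cutPoint] at hcut
  obtain ⟨hlt, hcut⟩ := hcut.sumElim
  obtain ⟨heq, hcut⟩ := hcut.sumElim
  obtain ⟨hmid, hcut⟩ := hcut.sumElim
  obtain ⟨heq', hgt⟩ := hcut.sumElim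
  rw [wittenSl4_eq_of_hasSum hgt, wittenSl4_eq_of_hasSum hlt, wittenSl4_eq_of_hasSum hmid,
    wittenSl3_eq_of_hasSum heq, wittenSl3_eq_of_hasSum heq']
  ring

theorem cut_point_recombination (i a b c : ℕ)
    (hi : 2 ≤ i) (ha : 2 ≤ a) (hb : 2 ≤ b) (hc : 2 ≤ c) :
    wittenSl4 a b 0 c 0 i + wittenSl4 i 0 b a 0 c + wittenSl4 0 0 a b i c =
      rzeta i * wittenSl3 a b c - wittenSl3 (a + i) b c - wittenSl3 a b (c + i) :=
  cut_point_recombination_general i a b c hi ha hb
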